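/- arXiv:2311.03870 — 2 statements merged into one kernel-verified Lean document; each statement's English description precedes it below -/
import Mathlib

section
/- Let Q be a quasi-copula on [0,1]² that lies in the linear span of copulas. Then its Minkowski norm satisfies ‖Q‖_M = 2α_Q − 1, where α_Q = sup_{n≥1} max{ max_i 2ⁿ Σ_{j=1}^{2ⁿ} V_Q(R_{ij}ⁿ)⁺ , max_j 2ⁿ Σ_{i=1}^{2ⁿ} V_Q(R_{ij}ⁿ)⁺ } and R_{ij}ⁿ = [(i−1)/2ⁿ, i/2ⁿ]×[(j−1)/2ⁿ, j/2ⁿ]. -/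
open Set

/-- A bivariate copula (conditions imposed on the unit square). -/
def IsCopula (C : ℝ → ℝ → ℝ) : Prop :=
  (∀ x ∈ Icc (0:ℝ) 1, C x 0 = 0 ∧ C 0 x = 0 ∧ C x 1 = x ∧ C 1 x = x) ∧
  (∀ x₁ ∈ Icc (0:ℝ) 1, ∀ x₂ ∈ Icc (0:ℝ) 1, ∀ y₁ ∈ Icc (0:ℝ) 1, ∀ y₂ ∈ Icc (0:ℝ) 1,
    x₁ ≤ x₂ → y₁ ≤ y₂ → 0 ≤ C x₂ y₂ - C x₁ y₂ - C x₂ y₁ + C x₁ y₁)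

/-- A bivariate quasi-copula (conditions imposed on the unit square). -/
def IsQuasiCopula (Q : ℝ → ℝ → ℝ) : Prop :=
  (∀ x ∈ Icc (0:ℝ) 1, Q x 0 = 0 ∧ Q 0 x = 0 ∧ Q x 1 = x ∧ Q 1 x = x) ∧
  (∀ x₁ ∈ Icc (0:ℝ) 1, ∀ x₂ ∈ Icc (0:ℝ) 1, ∀ y ∈ Icc (0:ℝ) 1,
    x₁ ≤ x₂ → Q x₁ y ≤ Q x₂ y) ∧
  (∀ x ∈ Icc (0:ℝ) 1, ∀ y₁ ∈ Icc (0:ℝ) 1, ∀ y₂ ∈ Icc (0:ℝ) 1,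
    y₁ ≤ y₂ → Q x y₁ ≤ Q x y₂) ∧
  (∀ x₁ ∈ Icc (0:ℝ) 1, ∀ x₂ ∈ Icc (0:ℝ) 1, ∀ y₁ ∈ Icc (0:ℝ) 1, ∀ y₂ ∈ Icc (0:ℝ) 1,
    |Q x₂ y₂ - Q x₁ y₁| ≤ |x₂ - x₁| + |y₂ - y₁|)

/-- Q-volume of the dyadic rectangle R_{ij}^n = [i/2^n,(i+1)/2^n] × [j/2^n,(j+1)/2^n]
(indices shifted by one with respect to the paper). -/
noncomputable def dyadVol (Q : ℝ → ℝ → ℝ) (n : ℕ) (i j : Fin (2^n)) : ℝ :=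
  Q (((i : ℕ) + 1) / 2^n) (((j : ℕ) + 1) / 2^n)
    - Q ((i : ℕ) / 2^n) (((j : ℕ) + 1) / 2^n)
    - Q (((i : ℕ) + 1) / 2^n) ((j : ℕ) / 2^n)
    + Q ((i : ℕ) / 2^n) ((j : ℕ) / 2^n)

/-- The set of all row/column sums of positive parts of dyadic volumes, normalized by
strip width; α_Q is its supremum. -/
noncomputable def alphaSet (Q : ℝ → ℝ → ℝ) : Set ℝ :=
  {r | ∃ n : ℕ, 1 ≤ n ∧
    ((∃ i : Fin (2^n), r = 2^n * ∑ j : Fin (2^n), max (dyadVol Q n i j) 0) ∨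
     (∃ j : Fin (2^n), r = 2^n * ∑ i : Fin (2^n), max (dyadVol Q n i j) 0))}

/-!
Write `σ = sSup (alphaSet Q)`. Any representation `Q = s B - t C` has `s - t = 1` (evaluate at
`(1, 1)`) and `V_Q⁺ ≤ s V_B` on every dyadic rectangle, so every row and column sum defining
`alphaSet Q` is at most `s`, and `s + t = 2 s - 1 ≥ 2 σ - 1`.

Conversely, at level `n` the line sums of the matrix `V_Q⁺` of dyadic volumes are at most `σ / 2ⁿ`.
Adding a product matrix that fills the deficits gives a matrix `P ≥ V_Q⁺` with all line sums
`σ / 2ⁿ`, and then `P - V_Q ≥ 0` has all line sums `(σ - 1) / 2ⁿ`. Spreading these masses uniformly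
over the cells gives copulas `B_n`, `C_n` with `σ B_n - (σ - 1) C_n = Q` on the level-`n` grid.
Pointwise ultrafilter limits `B`, `C` of these are copulas with `σ B - (σ - 1) C = Q` at all dyadic
points, hence everywhere, since copulas and quasi-copulas are Lipschitz.
-/

open Finset Filter Topology

def HasCopulaBoundary (F : ℝ → ℝ → ℝ) : Prop :=
  ∀ x ∈ Icc (0:ℝ) 1, F x 0 = 0 ∧ F 0 x = 0 ∧ F x 1 = x ∧ F 1 x = x

lemma isCopula_mul : IsCopula fun x y => x * y := by
  refine ⟨fun x _ => by simp, fun x₁ _ x₂ _ y₁ _ y₂ _ hx hy => ?_⟩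
  nlinarith [mul_nonneg (sub_nonneg.2 hx) (sub_nonneg.2 hy)]

namespace IsCopula

variable {C : ℝ → ℝ → ℝ}

lemma hasCopulaBoundary (hC : IsCopula C) : HasCopulaBoundary C := hC.1

lemma sub_mem_Icc_left (hC : IsCopula C) {x₁ x₂ y : ℝ} (hx₁ : x₁ ∈ Icc (0:ℝ) 1)
    (hx₂ : x₂ ∈ Icc (0:ℝ) 1) (hy : y ∈ Icc (0:ℝ) 1) (hx : x₁ ≤ x₂) :
    C x₂ y - C x₁ y ∈ Icc 0 (x₂ - x₁) := by
  have h0 : (0:ℝ) ∈ Icc (0:ℝ) 1 := by simp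
  have h1 : (1:ℝ) ∈ Icc (0:ℝ) 1 := by simp
  have hlow := hC.2 x₁ hx₁ x₂ hx₂ 0 h0 y hy hx hy.1
  have hupp := hC.2 x₁ hx₁ x₂ hx₂ y hy 1 h1 hx hy.2
  rw [(hC.1 x₁ hx₁).1, (hC.1 x₂ hx₂).1] at hlow
  rw [(hC.1 x₁ hx₁).2.2.1, (hC.1 x₂ hx₂).2.2.1] at hupp
  constructor <;> linarith

lemma transpose (hC : IsCopula C) : IsCopula fun x y => C y x :=
  ⟨fun x hx => ⟨(hC.1 x hx).2.1, (hC.1 x hx).1, (hC.1 x hx).2.2.2, (hC.1 x hx).2.2.1⟩,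
    fun x₁ hx₁ x₂ hx₂ y₁ hy₁ y₂ hy₂ hx hy => by
      linarith [hC.2 y₁ hy₁ y₂ hy₂ x₁ hx₁ x₂ hx₂ hy hx]⟩

lemma abs_sub_le_left (hC : IsCopula C) {x₁ x₂ y : ℝ} (hx₁ : x₁ ∈ Icc (0:ℝ) 1)
    (hx₂ : x₂ ∈ Icc (0:ℝ) 1) (hy : y ∈ Icc (0:ℝ) 1) :
    |C x₂ y - C x₁ y| ≤ |x₂ - x₁| := by
  rcases le_total x₁ x₂ with hx | hx
  · have h := hC.sub_mem_Icc_left hx₁ hx₂ hy hx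
    rw [abs_of_nonneg h.1, abs_of_nonneg (sub_nonneg.2 hx)]
    exact h.2
  · have h := hC.sub_mem_Icc_left hx₂ hx₁ hy hx
    rw [abs_sub_comm, abs_of_nonneg h.1, abs_sub_comm, abs_of_nonneg (sub_nonneg.2 hx)]
    exact h.2

lemma abs_sub_le (hC : IsCopula C) {x₁ x₂ y₁ y₂ : ℝ} (hx₁ : x₁ ∈ Icc (0:ℝ) 1)
    (hx₂ : x₂ ∈ Icc (0:ℝ) 1) (hy₁ : y₁ ∈ Icc (0:ℝ) 1) (hy₂ : y₂ ∈ Icc (0:ℝ) 1) :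
    |C x₂ y₂ - C x₁ y₁| ≤ |x₂ - x₁| + |y₂ - y₁| := calc
  |C x₂ y₂ - C x₁ y₁| ≤ |C x₂ y₂ - C x₁ y₂| + |C x₁ y₂ - C x₁ y₁| := _root_.abs_sub_le _ _ _
  _ ≤ |x₂ - x₁| + |y₂ - y₁| :=
    add_le_add (hC.abs_sub_le_left hx₁ hx₂ hy₂) (hC.transpose.abs_sub_le_left hy₁ hy₂ hx₁)

lemma mem_Icc (hC : IsCopula C) {x y : ℝ} (hx : x ∈ Icc (0:ℝ) 1) (hy : y ∈ Icc (0:ℝ) 1) :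
    C x y ∈ Icc (0:ℝ) 1 := by
  have h := hC.sub_mem_Icc_left (by simp) hx hy hx.1
  rw [(hC.1 y hy).2.1, sub_zero, sub_zero] at h
  exact ⟨h.1, h.2.trans hx.2⟩

lemma of_tendsto {ι : Type*} {l : Filter ι} [l.NeBot] {F : ι → ℝ → ℝ → ℝ}
    (hF : ∀ i, IsCopula (F i))
    (hlim : ∀ x ∈ Icc (0:ℝ) 1, ∀ y ∈ Icc (0:ℝ) 1, Tendsto (fun i => F i x y) l (𝓝 (C x y))) :
    IsCopula C := by
  have h0 : (0:ℝ) ∈ Icc (0:ℝ) 1 := by simp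
  have h1 : (1:ℝ) ∈ Icc (0:ℝ) 1 := by simp
  refine ⟨fun x hx => ⟨?_, ?_, ?_, ?_⟩, fun x₁ hx₁ x₂ hx₂ y₁ hy₁ y₂ hy₂ hx hy => ?_⟩
  · exact tendsto_nhds_unique (hlim x hx 0 h0) (by simp [((hF _).1 x hx).1])
  · exact tendsto_nhds_unique (hlim 0 h0 x hx) (by simp [((hF _).1 x hx).2.1])
  · exact tendsto_nhds_unique (hlim x hx 1 h1) (by simp [((hF _).1 x hx).2.2.1])
  · exact tendsto_nhds_unique (hlim 1 h1 x hx) (by simp [((hF _).1 x hx).2.2.2])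
  · exact ge_of_tendsto
      ((((hlim x₂ hx₂ y₂ hy₂).sub (hlim x₁ hx₁ y₂ hy₂)).sub (hlim x₂ hx₂ y₁ hy₁)).add
        (hlim x₁ hx₁ y₁ hy₁))
      (Eventually.of_forall fun i => (hF i).2 x₁ hx₁ x₂ hx₂ y₁ hy₁ y₂ hy₂ hx hy)

end IsCopula

/-- The distribution function of the uniform law on the cell `[i/N, (i+1)/N]`. -/
noncomputable def cellCdf (N i : ℕ) (x : ℝ) : ℝ := min (max (N * x - i) 0) 1

section cellCdf

variable {N : ℕ}

lemma cellCdf_mono (i : ℕ) : Monotone (cellCdf N i) := fun x₁ x₂ h => by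
  unfold cellCdf; gcongr

lemma cellCdf_zero (i : ℕ) : cellCdf N i 0 = 0 := by
  simp [cellCdf]

lemma cellCdf_one {i : ℕ} (hi : i < N) : cellCdf N i 1 = 1 := by
  have : (i:ℝ) + 1 ≤ N := by exact_mod_cast hi
  simp only [cellCdf, min_def, max_def]
  split_ifs <;> linarith

lemma cellCdf_natCast_div (hN : 0 < N) (i k : ℕ) :
    cellCdf N i (k / N) = if i < k then 1 else 0 := by
  have hk : (N:ℝ) * (k / N) = k := mul_div_cancel₀ _ (by positivity)
  rw [cellCdf, hk]
  split_ifs with h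
  · have : (i:ℝ) + 1 ≤ k := by exact_mod_cast h
    simp only [min_def, max_def]
    split_ifs <;> linarith
  · have : (k:ℝ) ≤ i := by exact_mod_cast not_lt.1 h
    simp only [min_def, max_def]
    split_ifs <;> linarith

lemma cellCdf_eq_min_sub_min (i : ℕ) (x : ℝ) :
    cellCdf N i x = min (N * x) (i + 1 : ℕ) - min (N * x) i := by
  push_cast
  simp only [cellCdf, min_def, max_def]
  split_ifs <;> linarith

lemma sum_cellCdf {x : ℝ} (hx : x ∈ Icc (0:ℝ) 1) : ∑ i : Fin N, cellCdf N i x = N * x := by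
  rw [Fin.sum_univ_eq_sum_range (cellCdf N · x)]
  simp_rw [cellCdf_eq_min_sub_min]
  rw [Finset.sum_range_sub (fun i : ℕ => min ((N:ℝ) * x) i),
    min_eq_left (by nlinarith [hx.2, (Nat.cast_nonneg N : (0:ℝ) ≤ N)]),
    min_eq_right (by simpa using mul_nonneg (Nat.cast_nonneg N) hx.1)]
  simp

end cellCdf

noncomputable def checkerboard (N : ℕ) (M : Fin N → Fin N → ℝ) (x y : ℝ) : ℝ :=
  ∑ i, ∑ j, M i j * cellCdf N i x * cellCdf N j y

section checkerboard

variable {N : ℕ} {M : Fin N → Fin N → ℝ}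

lemma checkerboard_sub (M' : Fin N → Fin N → ℝ) (x y : ℝ) :
    checkerboard N (M - M') x y = checkerboard N M x y - checkerboard N M' x y := by
  simp only [checkerboard, ← Finset.sum_sub_distrib, Pi.sub_apply, sub_mul]

lemma checkerboard_smul (c : ℝ) (x y : ℝ) :
    checkerboard N (c • M) x y = c * checkerboard N M x y := by
  simp only [checkerboard, Finset.mul_sum, Pi.smul_apply, smul_eq_mul, mul_assoc]

lemma checkerboard_natCast_div (hN : 0 < N) (k l : ℕ) :
    checkerboard N M (k / N) (l / N) =
      ∑ i : Fin N, ∑ j : Fin N, if (i:ℕ) < k ∧ (j:ℕ) < l then M i j else 0 := by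
  simp only [checkerboard, cellCdf_natCast_div hN, ite_and]
  congr! 2 with i _ j _
  split_ifs <;> simp

lemma checkerboard_volume (x₁ x₂ y₁ y₂ : ℝ) :
    checkerboard N M x₂ y₂ - checkerboard N M x₁ y₂ - checkerboard N M x₂ y₁
        + checkerboard N M x₁ y₁ =
      ∑ i, ∑ j, M i j * (cellCdf N i x₂ - cellCdf N i x₁) * (cellCdf N j y₂ - cellCdf N j y₁) := by
  simp only [checkerboard, ← Finset.sum_sub_distrib, ← Finset.sum_add_distrib]
  congr! 2
  ring

lemma isCopula_checkerboard (hN : 0 < N) (hM : ∀ i j, 0 ≤ M i j)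
    (hrow : ∀ i, ∑ j, M i j = 1 / N) (hcol : ∀ j, ∑ i, M i j = 1 / N) :
    IsCopula (checkerboard N M) := by
  refine ⟨fun x hx => ⟨?_, ?_, ?_, ?_⟩, fun x₁ _ x₂ _ y₁ _ y₂ _ hx hy => ?_⟩
  · simp [checkerboard, cellCdf_zero]
  · simp [checkerboard, cellCdf_zero]
  · simp only [checkerboard, cellCdf_one (Fin.is_lt _), mul_one, ← Finset.sum_mul, hrow]
    rw [← Finset.mul_sum, sum_cellCdf hx]
    field_simp
  · rw [checkerboard, Finset.sum_comm]
    simp only [cellCdf_one (Fin.is_lt _), mul_one, ← Finset.sum_mul, hcol]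
    rw [← Finset.mul_sum, sum_cellCdf hx]
    field_simp
  · rw [checkerboard_volume]
    refine Finset.sum_nonneg fun i _ => Finset.sum_nonneg fun j _ => ?_
    have := sub_nonneg.2 (cellCdf_mono (N := N) i hx)
    have := sub_nonneg.2 (cellCdf_mono (N := N) j hy)
    have := hM i j
    positivity

end checkerboard

lemma Finset.sum_range_rectVolume (G : ℕ → ℕ → ℝ) (a l : ℕ) :
    ∑ b ∈ range l, (G (a + 1) (b + 1) - G a (b + 1) - G (a + 1) b + G a b) =
      (G (a + 1) l - G a l) - (G (a + 1) 0 - G a 0) := by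
  rw [← Finset.sum_range_sub (fun b => G (a + 1) b - G a b)]
  congr! 1; ring

lemma Finset.sum_range_sum_range_rectVolume (G : ℕ → ℕ → ℝ) (k l : ℕ) :
    ∑ a ∈ range k, ∑ b ∈ range l, (G (a + 1) (b + 1) - G a (b + 1) - G (a + 1) b + G a b) =
      G k l - G 0 l - G k 0 + G 0 0 := by
  have hl := Finset.sum_range_sub (G · l) k
  have h0 := Finset.sum_range_sub (G · 0) k
  simp only [Finset.sum_range_rectVolume, Finset.sum_sub_distrib] at hl h0 ⊢
  rw [hl, h0]
  ring

lemma Fin.sum_univ_ite_lt {N k : ℕ} (hk : k ≤ N) (f : ℕ → ℝ) :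
    ∑ i : Fin N, (if (i:ℕ) < k then f i else 0) = ∑ i ∈ range k, f i := by
  rw [Fin.sum_univ_eq_sum_range (fun i => if i < k then f i else 0), ← Finset.sum_filter]
  congr 1
  ext i
  simp only [Finset.mem_filter, Finset.mem_range]
  omega

lemma natCast_div_two_pow_mem_Icc {n k : ℕ} (hk : k ≤ 2 ^ n) :
    (k:ℝ) / 2 ^ n ∈ Icc (0:ℝ) 1 :=
  ⟨by positivity, div_le_one_of_le₀ (by exact_mod_cast hk) (by positivity)⟩

section dyadVol

variable {F : ℝ → ℝ → ℝ} {n : ℕ}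

lemma dyadVol_eq (F : ℝ → ℝ → ℝ) (n : ℕ) (i j : Fin (2 ^ n)) :
    dyadVol F n i j =
      F ((i + 1 : ℕ) / 2 ^ n) ((j + 1 : ℕ) / 2 ^ n) - F (i / 2 ^ n) ((j + 1 : ℕ) / 2 ^ n)
        - F ((i + 1 : ℕ) / 2 ^ n) (j / 2 ^ n) + F (i / 2 ^ n) (j / 2 ^ n) := by
  rw [dyadVol]; push_cast; rfl

lemma dyadVol_transpose (F : ℝ → ℝ → ℝ) (n : ℕ) (i j : Fin (2 ^ n)) :
    dyadVol (fun x y => F y x) n j i = dyadVol F n i j := by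
  simp only [dyadVol]; ring

lemma dyadVol_eq_add_of_eqOn {A B : ℝ → ℝ → ℝ} {a b : ℝ}
    (hF : ∀ x ∈ Icc (0:ℝ) 1, ∀ y ∈ Icc (0:ℝ) 1, F x y = a * A x y + b * B x y)
    (i j : Fin (2 ^ n)) :
    dyadVol F n i j = a * dyadVol A n i j + b * dyadVol B n i j := by
  have hi := natCast_div_two_pow_mem_Icc i.is_lt.le
  have hi' := natCast_div_two_pow_mem_Icc i.is_lt
  have hj := natCast_div_two_pow_mem_Icc j.is_lt.le
  have hj' := natCast_div_two_pow_mem_Icc j.is_lt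
  simp only [dyadVol_eq, hF _ hi _ hj, hF _ hi' _ hj, hF _ hi _ hj', hF _ hi' _ hj']
  ring

lemma IsCopula.dyadVol_nonneg {C : ℝ → ℝ → ℝ} (hC : IsCopula C) (i j : Fin (2 ^ n)) :
    0 ≤ dyadVol C n i j := by
  rw [dyadVol_eq]
  exact hC.2 _ (natCast_div_two_pow_mem_Icc i.is_lt.le) _ (natCast_div_two_pow_mem_Icc i.is_lt)
    _ (natCast_div_two_pow_mem_Icc j.is_lt.le) _ (natCast_div_two_pow_mem_Icc j.is_lt)
    (by gcongr; simp) (by gcongr; simp)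

lemma HasCopulaBoundary.sum_dyadVol_row (hF : HasCopulaBoundary F) (i : Fin (2 ^ n)) :
    ∑ j, dyadVol F n i j = 1 / 2 ^ n := by
  simp only [dyadVol_eq]
  rw [Fin.sum_univ_eq_sum_range (fun b => F ((i + 1 : ℕ) / 2 ^ n) ((b + 1 : ℕ) / 2 ^ n)
      - F (i / 2 ^ n) ((b + 1 : ℕ) / 2 ^ n) - F ((i + 1 : ℕ) / 2 ^ n) (b / 2 ^ n)
      + F (i / 2 ^ n) (b / 2 ^ n)),
    Finset.sum_range_rectVolume (fun a b => F (a / 2 ^ n) (b / 2 ^ n))]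
  have hi := natCast_div_two_pow_mem_Icc i.is_lt.le
  have hi' := natCast_div_two_pow_mem_Icc i.is_lt
  push_cast at hi' ⊢
  rw [zero_div, div_self (by positivity), (hF _ hi).1, (hF _ hi').1, (hF _ hi).2.2.1,
    (hF _ hi').2.2.1]
  ring

lemma HasCopulaBoundary.transpose (hF : HasCopulaBoundary F) :
    HasCopulaBoundary fun x y => F y x :=
  fun x hx => ⟨(hF x hx).2.1, (hF x hx).1, (hF x hx).2.2.2, (hF x hx).2.2.1⟩

lemma HasCopulaBoundary.sum_dyadVol_col (hF : HasCopulaBoundary F) (j : Fin (2 ^ n)) :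
    ∑ i, dyadVol F n i j = 1 / 2 ^ n := by
  simpa only [dyadVol_transpose] using hF.transpose.sum_dyadVol_row j

lemma HasCopulaBoundary.checkerboard_dyadVol (hF : HasCopulaBoundary F) {k l : ℕ}
    (hk : k ≤ 2 ^ n) (hl : l ≤ 2 ^ n) :
    checkerboard (2 ^ n) (dyadVol F n) (k / 2 ^ n) (l / 2 ^ n) = F (k / 2 ^ n) (l / 2 ^ n) := by
  have h := checkerboard_natCast_div (M := dyadVol F n) (N := 2 ^ n) (by positivity) k l
  push_cast at h
  set G : ℕ → ℕ → ℝ := fun a b => F (a / 2 ^ n) (b / 2 ^ n) with hG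
  have hvol : ∀ i j : Fin (2 ^ n), dyadVol F n i j =
      G (i + 1) (j + 1) - G i (j + 1) - G (i + 1) j + G i j := fun i j => dyadVol_eq F n i j
  simp only [h, ite_and, hvol, Finset.sum_ite_irrel, Finset.sum_const_zero]
  rw [Fin.sum_univ_ite_lt hk (fun a => ∑ j : Fin (2 ^ n),
      if (j:ℕ) < l then G (a + 1) (j + 1) - G a (j + 1) - G (a + 1) j + G a j else 0)]
  simp only [fun a => Fin.sum_univ_ite_lt hl
    (fun b => G (a + 1) (b + 1) - G a (b + 1) - G (a + 1) b + G a b)]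
  rw [Finset.sum_range_sum_range_rectVolume]
  have h0 : ((0:ℕ):ℝ) / 2 ^ n = 0 := by simp
  simp only [hG, h0, (hF _ (natCast_div_two_pow_mem_Icc hk)).1,
    (hF _ (natCast_div_two_pow_mem_Icc hl)).2.1, (hF 0 (by simp)).1]
  ring

end dyadVol

section alphaSet

variable {Q : ℝ → ℝ → ℝ}

lemma alphaSet_nonempty (Q : ℝ → ℝ → ℝ) : (alphaSet Q).Nonempty :=
  ⟨_, 1, le_rfl, Or.inl ⟨0, rfl⟩⟩

lemma forall_mem_alphaSet_le {c : ℝ} {W : (n : ℕ) → Fin (2 ^ n) → Fin (2 ^ n) → ℝ}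
    (hW : ∀ n i j, max (dyadVol Q n i j) 0 ≤ W n i j)
    (hrow : ∀ n i, ∑ j, W n i j = c / 2 ^ n) (hcol : ∀ n j, ∑ i, W n i j = c / 2 ^ n) :
    ∀ a ∈ alphaSet Q, a ≤ c := by
  rintro a ⟨n, -, ⟨i, rfl⟩ | ⟨j, rfl⟩⟩
  · calc (2:ℝ) ^ n * ∑ j, max (dyadVol Q n i j) 0 ≤ 2 ^ n * ∑ j, W n i j := by
          gcongr with j; exact hW n i j
      _ = c := by rw [hrow]; field_simp
  · calc (2:ℝ) ^ n * ∑ i, max (dyadVol Q n i j) 0 ≤ 2 ^ n * ∑ i, W n i j := by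
          gcongr with i; exact hW n i j
      _ = c := by rw [hcol]; field_simp

lemma alphaSet_bddAbove
    (hspan : ∃ (A B : ℝ → ℝ → ℝ) (α β : ℝ), IsCopula A ∧ IsCopula B ∧
      ∀ x ∈ Icc (0:ℝ) 1, ∀ y ∈ Icc (0:ℝ) 1, Q x y = α * A x y + β * B x y) :
    BddAbove (alphaSet Q) := by
  obtain ⟨A, B, α, β, hA, hB, hQ⟩ := hspan
  refine ⟨|α| + |β|, forall_mem_alphaSet_le (W := fun n i j => |α| * dyadVol A n i j +
    |β| * dyadVol B n i j) (fun n i j => ?_) (fun n i => ?_) (fun n j => ?_)⟩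
  · have := hA.dyadVol_nonneg i j
    have := hB.dyadVol_nonneg i j
    rw [dyadVol_eq_add_of_eqOn hQ]
    exact max_le (by gcongr <;> exact le_abs_self _) (by positivity)
  · rw [Finset.sum_add_distrib, ← Finset.mul_sum, ← Finset.mul_sum,
      hA.hasCopulaBoundary.sum_dyadVol_row, hB.hasCopulaBoundary.sum_dyadVol_row]
    ring
  · rw [Finset.sum_add_distrib, ← Finset.mul_sum, ← Finset.mul_sum,
      hA.hasCopulaBoundary.sum_dyadVol_col, hB.hasCopulaBoundary.sum_dyadVol_col]
    ring

lemma sSup_alphaSet_le_of_eqOn_sub {B C : ℝ → ℝ → ℝ} {s t : ℝ} (hs : 0 ≤ s) (ht : 0 ≤ t)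
    (hB : IsCopula B) (hC : IsCopula C)
    (hQ : ∀ x ∈ Icc (0:ℝ) 1, ∀ y ∈ Icc (0:ℝ) 1, Q x y = s * B x y - t * C x y) :
    sSup (alphaSet Q) ≤ s := by
  have hQ' : ∀ x ∈ Icc (0:ℝ) 1, ∀ y ∈ Icc (0:ℝ) 1, Q x y = s * B x y + -t * C x y :=
    fun x hx y hy => by rw [hQ x hx y hy]; ring
  refine csSup_le (alphaSet_nonempty Q) (forall_mem_alphaSet_le
    (W := fun n i j => s * dyadVol B n i j) (fun n i j => ?_) (fun n i => ?_) (fun n j => ?_))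
  · have := hB.dyadVol_nonneg i j
    have := hC.dyadVol_nonneg i j
    rw [dyadVol_eq_add_of_eqOn hQ']
    exact max_le (by nlinarith) (by positivity)
  · rw [← Finset.mul_sum, hB.hasCopulaBoundary.sum_dyadVol_row, mul_one_div]
  · rw [← Finset.mul_sum, hB.hasCopulaBoundary.sum_dyadVol_col, mul_one_div]

variable (hbdd : BddAbove (alphaSet Q))
include hbdd

lemma one_le_sSup_alphaSet (hQ : HasCopulaBoundary Q) : 1 ≤ sSup (alphaSet Q) := by
  refine le_csSup_of_le hbdd ⟨1, le_rfl, Or.inl ⟨0, rfl⟩⟩ ?_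
  calc (1:ℝ) = 2 ^ 1 * ∑ j, dyadVol Q 1 0 j := by rw [hQ.sum_dyadVol_row]; norm_num
    _ ≤ 2 ^ 1 * ∑ j, max (dyadVol Q 1 0 j) 0 := by gcongr with j; exact le_max_left _ _

lemma sum_max_dyadVol_row_le {n : ℕ} (hn : 1 ≤ n) (i : Fin (2 ^ n)) :
    ∑ j, max (dyadVol Q n i j) 0 ≤ sSup (alphaSet Q) / 2 ^ n := by
  rw [le_div_iff₀' (by positivity)]
  exact le_csSup hbdd ⟨n, hn, Or.inl ⟨i, rfl⟩⟩

lemma sum_max_dyadVol_col_le {n : ℕ} (hn : 1 ≤ n) (j : Fin (2 ^ n)) :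
    ∑ i, max (dyadVol Q n i j) 0 ≤ sSup (alphaSet Q) / 2 ^ n := by
  rw [le_div_iff₀' (by positivity)]
  exact le_csSup hbdd ⟨n, hn, Or.inr ⟨j, rfl⟩⟩

end alphaSet

lemma exists_nonneg_matrix_sum_eq {ι κ : Type*} [Fintype ι] [Fintype κ] {u : ι → ℝ}
    {w : κ → ℝ} (hu : ∀ i, 0 ≤ u i) (hw : ∀ j, 0 ≤ w j) (h : ∑ i, u i = ∑ j, w j) :
    ∃ d : ι → κ → ℝ, (∀ i j, 0 ≤ d i j) ∧ (∀ i, ∑ j, d i j = u i) ∧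
      (∀ j, ∑ i, d i j = w j) := by
  by_cases h0 : ∑ j, w j = 0
  · have hu0 : ∀ i, u i = 0 := fun i =>
      (Finset.sum_eq_zero_iff_of_nonneg fun i _ => hu i).1 (h.trans h0) i (Finset.mem_univ i)
    have hw0 : ∀ j, w j = 0 := fun j =>
      (Finset.sum_eq_zero_iff_of_nonneg fun j _ => hw j).1 h0 j (Finset.mem_univ j)
    exact ⟨0, fun _ _ => le_rfl, by simp [hu0], by simp [hw0]⟩
  refine ⟨fun i j => u i * w j / ∑ j, w j,
    fun i j => div_nonneg (mul_nonneg (hu i) (hw j)) (Finset.sum_nonneg fun j _ => hw j),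
    fun i => ?_, fun j => ?_⟩
  · rw [← Finset.sum_div, ← Finset.mul_sum, mul_div_cancel_right₀ _ h0]
  · rw [← Finset.sum_div, ← Finset.sum_mul, h, mul_div_cancel_left₀ _ h0]

lemma exists_max_le_matrix_sum_eq {ι : Type*} [Fintype ι] (v : ι → ι → ℝ) {s : ℝ}
    (hrow : ∀ i, ∑ j, max (v i j) 0 ≤ s) (hcol : ∀ j, ∑ i, max (v i j) 0 ≤ s) :
    ∃ P : ι → ι → ℝ, (∀ i j, max (v i j) 0 ≤ P i j) ∧ (∀ i, ∑ j, P i j = s) ∧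
      (∀ j, ∑ i, P i j = s) := by
  obtain ⟨d, hd, hdrow, hdcol⟩ := exists_nonneg_matrix_sum_eq (fun i => sub_nonneg.2 (hrow i))
    (fun j => sub_nonneg.2 (hcol j)) (by simp only [Finset.sum_sub_distrib]; rw [Finset.sum_comm])
  refine ⟨fun i j => max (v i j) 0 + d i j, fun i j => le_add_of_nonneg_right (hd i j),
    fun i => ?_, fun j => ?_⟩
  · rw [Finset.sum_add_distrib, hdrow]; ring
  · rw [Finset.sum_add_distrib, hdcol]; ring

lemma exists_isCopula_mul_eq_checkerboard {N : ℕ} (hN : 0 < N) {M : Fin N → Fin N → ℝ}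
    (hM : ∀ i j, 0 ≤ M i j) {c : ℝ} (hc : 0 ≤ c) (hrow : ∀ i, ∑ j, M i j = c / N)
    (hcol : ∀ j, ∑ i, M i j = c / N) :
    ∃ C, IsCopula C ∧ ∀ x y, c * C x y = checkerboard N M x y := by
  rcases hc.eq_or_lt with rfl | hc
  · have hM0 : ∀ i j, M i j = 0 := fun i j => (Finset.sum_eq_zero_iff_of_nonneg
      fun j _ => hM i j).1 (by simp [hrow]) j (Finset.mem_univ j)
    exact ⟨_, isCopula_mul, fun x y => by simp [checkerboard, hM0]⟩
  refine ⟨checkerboard N (c⁻¹ • M), isCopula_checkerboard hN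
    (fun i j => by have := hM i j; simp only [Pi.smul_apply, smul_eq_mul]; positivity)
    (fun i => ?_) (fun j => ?_), fun x y => ?_⟩
  · simp only [Pi.smul_apply, smul_eq_mul, ← Finset.mul_sum, hrow]
    field_simp
  · simp only [Pi.smul_apply, smul_eq_mul, ← Finset.mul_sum, hcol]
    field_simp
  · rw [checkerboard_smul, ← mul_assoc, mul_inv_cancel₀ hc.ne', one_mul]

def dyadicGrid (n : ℕ) : Set ℝ := {x | ∃ k : ℕ, k ≤ 2 ^ n ∧ (k:ℝ) / 2 ^ n = x}

lemma dyadicGrid_subset_Icc (n : ℕ) : dyadicGrid n ⊆ Icc 0 1 := by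
  rintro _ ⟨k, hk, rfl⟩
  exact natCast_div_two_pow_mem_Icc hk

lemma dyadicGrid_mono : Monotone dyadicGrid := by
  intro m n hmn _ ⟨k, hk, hx⟩
  refine ⟨k * 2 ^ (n - m), ?_, ?_⟩
  · calc k * 2 ^ (n - m) ≤ 2 ^ m * 2 ^ (n - m) := Nat.mul_le_mul_right _ hk
      _ = 2 ^ n := by rw [← pow_add, Nat.add_sub_cancel' hmn]
  · rw [← hx, Nat.cast_mul, Nat.cast_pow, Nat.cast_ofNat, ← Nat.sub_add_cancel hmn, pow_add,
      Nat.add_sub_cancel]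
    field_simp

lemma exists_mem_dyadicGrid_abs_sub_le {x : ℝ} (hx : x ∈ Icc (0:ℝ) 1) (n : ℕ) :
    ∃ z ∈ dyadicGrid n, |x - z| ≤ 1 / 2 ^ n := by
  have h2n : (0:ℝ) < 2 ^ n := by positivity
  have hx0 : 0 ≤ x * 2 ^ n := mul_nonneg hx.1 h2n.le
  refine ⟨_, ⟨⌊x * 2 ^ n⌋₊, Nat.floor_le_of_le ?_, rfl⟩, ?_⟩
  · push_cast; nlinarith [hx.2]
  · have hlo := Nat.floor_le hx0
    have hhi := Nat.lt_floor_add_one (x * 2 ^ n)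
    rw [show x - ⌊x * 2 ^ n⌋₊ / 2 ^ n = (x * 2 ^ n - ⌊x * 2 ^ n⌋₊) / 2 ^ n by field_simp,
      abs_of_nonneg (by apply div_nonneg <;> linarith)]
    gcongr
    linarith

lemma eq_zero_of_forall_dyadicGrid {F : ℝ → ℝ → ℝ} {L : ℝ} (hL : 0 ≤ L)
    (hF : ∀ x₁ ∈ Icc (0:ℝ) 1, ∀ x₂ ∈ Icc (0:ℝ) 1, ∀ y₁ ∈ Icc (0:ℝ) 1, ∀ y₂ ∈ Icc (0:ℝ) 1,
      |F x₂ y₂ - F x₁ y₁| ≤ L * (|x₂ - x₁| + |y₂ - y₁|))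
    (hgrid : ∀ n, ∀ x ∈ dyadicGrid n, ∀ y ∈ dyadicGrid n, F x y = 0)
    {x y : ℝ} (hx : x ∈ Icc (0:ℝ) 1) (hy : y ∈ Icc (0:ℝ) 1) : F x y = 0 := by
  have hbound : ∀ n : ℕ, |F x y| ≤ 2 * L * (1 / 2) ^ n := fun n => by
    obtain ⟨z, hz, hxz⟩ := exists_mem_dyadicGrid_abs_sub_le hx n
    obtain ⟨w, hw, hyw⟩ := exists_mem_dyadicGrid_abs_sub_le hy n
    calc |F x y| = |F x y - F z w| := by rw [hgrid n z hz w hw, sub_zero]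
      _ ≤ L * (|x - z| + |y - w|) :=
        hF z (dyadicGrid_subset_Icc n hz) x hx w (dyadicGrid_subset_Icc n hw) y hy
      _ ≤ L * (1 / 2 ^ n + 1 / 2 ^ n) := by gcongr
      _ = 2 * L * (1 / 2) ^ n := by rw [one_div_pow]; ring
  have hlim : Tendsto (fun n : ℕ => 2 * L * (1 / 2 : ℝ) ^ n) atTop (𝓝 0) := by
    simpa using (tendsto_pow_atTop_nhds_zero_of_lt_one (by norm_num : (0:ℝ) ≤ 1 / 2)
      (by norm_num)).const_mul (2 * L)
  exact abs_nonpos_iff.1 (ge_of_tendsto' hlim hbound)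

lemma IsCompact.tendsto_limUnder_ultrafilter {X ι : Type*} [TopologicalSpace X] [Nonempty X]
    {s : Set X} (hs : IsCompact s) (u : Ultrafilter ι) {f : ι → X} (hf : ∀ i, f i ∈ s) :
    Tendsto f u (𝓝 (limUnder u f)) := by
  obtain ⟨x, -, hx⟩ := hs.ultrafilter_le_nhds (u.map f)
    (by rw [Ultrafilter.coe_map, le_principal_iff]; exact mem_map.2 (univ_mem' hf))
  exact tendsto_nhds_limUnder ⟨x, hx⟩

section representation

variable {Q : ℝ → ℝ → ℝ}

lemma exists_isCopula_sub_eq_on_dyadicGrid (hQ : HasCopulaBoundary Q)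
    (hbdd : BddAbove (alphaSet Q)) {n : ℕ} (hn : 1 ≤ n) :
    ∃ B C : ℝ → ℝ → ℝ, IsCopula B ∧ IsCopula C ∧ ∀ x ∈ dyadicGrid n, ∀ y ∈ dyadicGrid n,
      sSup (alphaSet Q) * B x y - (sSup (alphaSet Q) - 1) * C x y = Q x y := by
  set σ := sSup (alphaSet Q)
  have hσ := one_le_sSup_alphaSet hbdd hQ
  have hcast : ((2 ^ n : ℕ) : ℝ) = 2 ^ n := by push_cast; rfl
  obtain ⟨P, hvP, hProw, hPcol⟩ := exists_max_le_matrix_sum_eq (dyadVol Q n)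
    (sum_max_dyadVol_row_le hbdd hn) (sum_max_dyadVol_col_le hbdd hn)
  obtain ⟨B, hB, hBP⟩ := exists_isCopula_mul_eq_checkerboard (by positivity)
    (fun i j => (le_max_right _ _).trans (hvP i j)) (by linarith : 0 ≤ σ)
    (by rwa [hcast]) (by rwa [hcast])
  have hRrow : ∀ i, ∑ j, (P - dyadVol Q n) i j = (σ - 1) / ((2 ^ n : ℕ) : ℝ) := fun i => by
    simp only [Pi.sub_apply, Finset.sum_sub_distrib, hProw, hQ.sum_dyadVol_row, hcast]
    ring
  have hRcol : ∀ j, ∑ i, (P - dyadVol Q n) i j = (σ - 1) / ((2 ^ n : ℕ) : ℝ) := fun j => by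
    simp only [Pi.sub_apply, Finset.sum_sub_distrib, hPcol, hQ.sum_dyadVol_col, hcast]
    ring
  obtain ⟨C, hC, hCR⟩ := exists_isCopula_mul_eq_checkerboard (M := P - dyadVol Q n)
    (by positivity) (fun i j => sub_nonneg.2 ((le_max_left _ _).trans (hvP i j)))
    (by linarith : 0 ≤ σ - 1) hRrow hRcol
  refine ⟨B, C, hB, hC, ?_⟩
  rintro _ ⟨k, hk, rfl⟩ _ ⟨l, hl, rfl⟩
  rw [hBP, hCR, ← checkerboard_sub, sub_sub_cancel, hQ.checkerboard_dyadVol hk hl]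

lemma exists_isCopula_sub_eq_on_forall_dyadicGrid (hQ : HasCopulaBoundary Q)
    (hbdd : BddAbove (alphaSet Q)) :
    ∃ B C : ℝ → ℝ → ℝ, IsCopula B ∧ IsCopula C ∧ ∀ m, ∀ x ∈ dyadicGrid m, ∀ y ∈ dyadicGrid m,
      sSup (alphaSet Q) * B x y - (sSup (alphaSet Q) - 1) * C x y = Q x y := by
  choose Bn Cn hBn hCn hgrid using fun n : ℕ =>
    exists_isCopula_sub_eq_on_dyadicGrid hQ hbdd (Nat.le_add_left 1 n)
  let u := Ultrafilter.of (atTop : Filter ℕ)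
  have hBlim : ∀ x ∈ Icc (0:ℝ) 1, ∀ y ∈ Icc (0:ℝ) 1,
      Tendsto (Bn · x y) u (𝓝 (limUnder u (Bn · x y))) := fun x hx y hy =>
    isCompact_Icc.tendsto_limUnder_ultrafilter u fun n => (hBn n).mem_Icc hx hy
  have hClim : ∀ x ∈ Icc (0:ℝ) 1, ∀ y ∈ Icc (0:ℝ) 1,
      Tendsto (Cn · x y) u (𝓝 (limUnder u (Cn · x y))) := fun x hx y hy =>
    isCompact_Icc.tendsto_limUnder_ultrafilter u fun n => (hCn n).mem_Icc hx hy
  refine ⟨_, _, IsCopula.of_tendsto hBn hBlim, IsCopula.of_tendsto hCn hClim,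
    fun m x hx y hy => ?_⟩
  have hx' := dyadicGrid_subset_Icc m hx
  have hy' := dyadicGrid_subset_Icc m hy
  refine tendsto_nhds_unique (((hBlim x hx' y hy').const_mul _).sub
    ((hClim x hx' y hy').const_mul _)) (tendsto_const_nhds.congr' ?_)
  filter_upwards [Ultrafilter.of_le atTop (Ici_mem_atTop m)] with n (hn : m ≤ n)
  exact (hgrid n x (dyadicGrid_mono (by omega) hx) y (dyadicGrid_mono (by omega) hy)).symm

lemma exists_isCopula_eqOn_sub (hQ : IsQuasiCopula Q) (hbdd : BddAbove (alphaSet Q)) :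
    ∃ B C : ℝ → ℝ → ℝ, IsCopula B ∧ IsCopula C ∧ ∀ x ∈ Icc (0:ℝ) 1, ∀ y ∈ Icc (0:ℝ) 1,
      Q x y = sSup (alphaSet Q) * B x y - (sSup (alphaSet Q) - 1) * C x y := by
  set σ := sSup (alphaSet Q)
  have hσ : 1 ≤ σ := one_le_sSup_alphaSet hbdd hQ.1
  obtain ⟨B, C, hB, hC, hgrid⟩ := exists_isCopula_sub_eq_on_forall_dyadicGrid hQ.1 hbdd
  refine ⟨B, C, hB, hC, fun x hx y hy => ?_⟩
  have hlip : ∀ x₁ ∈ Icc (0:ℝ) 1, ∀ x₂ ∈ Icc (0:ℝ) 1, ∀ y₁ ∈ Icc (0:ℝ) 1, ∀ y₂ ∈ Icc (0:ℝ) 1,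
      |(σ * B x₂ y₂ - (σ - 1) * C x₂ y₂ - Q x₂ y₂) - (σ * B x₁ y₁ - (σ - 1) * C x₁ y₁ - Q x₁ y₁)|
        ≤ 2 * σ * (|x₂ - x₁| + |y₂ - y₁|) := by
    intro x₁ hx₁ x₂ hx₂ y₁ hy₁ y₂ hy₂
    have hB' := hB.abs_sub_le hx₁ hx₂ hy₁ hy₂
    have hC' := hC.abs_sub_le hx₁ hx₂ hy₁ hy₂
    have hQ' := hQ.2.2.2 x₁ hx₁ x₂ hx₂ y₁ hy₁ y₂ hy₂
    calc _ = |σ * (B x₂ y₂ - B x₁ y₁) - (σ - 1) * (C x₂ y₂ - C x₁ y₁) - (Q x₂ y₂ - Q x₁ y₁)| := by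
          ring_nf
      _ ≤ σ * |B x₂ y₂ - B x₁ y₁| + (σ - 1) * |C x₂ y₂ - C x₁ y₁| + |Q x₂ y₂ - Q x₁ y₁| := by
          refine (abs_sub _ _).trans (add_le_add_left ((abs_sub _ _).trans_eq ?_) _)
          rw [abs_mul, abs_mul, abs_of_nonneg (by linarith : 0 ≤ σ),
            abs_of_nonneg (by linarith : 0 ≤ σ - 1)]
      _ ≤ 2 * σ * (|x₂ - x₁| + |y₂ - y₁|) := by nlinarith
  have := eq_zero_of_forall_dyadicGrid (by linarith) hlip
    (fun m x hx y hy => sub_eq_zero.2 (hgrid m x hx y hy)) hx hy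
  linarith

end representation

theorem stmt16 (Q : ℝ → ℝ → ℝ) (hQ : IsQuasiCopula Q)
    (hspan : ∃ (A B : ℝ → ℝ → ℝ) (α β : ℝ), IsCopula A ∧ IsCopula B ∧
      ∀ x ∈ Icc (0:ℝ) 1, ∀ y ∈ Icc (0:ℝ) 1, Q x y = α * A x y + β * B x y) :
    IsLeast {r : ℝ | ∃ s t : ℝ, ∃ B C : ℝ → ℝ → ℝ,
        0 ≤ s ∧ 0 ≤ t ∧ IsCopula B ∧ IsCopula C ∧
        (∀ x ∈ Icc (0:ℝ) 1, ∀ y ∈ Icc (0:ℝ) 1,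
          Q x y = s * B x y - t * C x y) ∧ r = s + t}
      (2 * sSup (alphaSet Q) - 1) := by
  have hbdd := alphaSet_bddAbove hspan
  have hσ := one_le_sSup_alphaSet hbdd hQ.1
  obtain ⟨B, C, hB, hC, hrep⟩ := exists_isCopula_eqOn_sub hQ hbdd
  refine ⟨⟨_, _, B, C, by linarith, by linarith, hB, hC, hrep, by ring⟩, ?_⟩
  rintro _ ⟨s, t, B, C, hs, ht, hB, hC, hrep, rfl⟩
  have h1 : (1 : ℝ) ∈ Icc (0:ℝ) 1 := by simp
  have hst : 1 = s - t := by
    simpa [(hQ.1 1 h1).2.2.1, (hB.1 1 h1).2.2.1, (hC.1 1 h1).2.2.1] using hrep 1 h1 1 h1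
  linarith [sSup_alphaSet_le_of_eqOn_sub hs ht hB hC hrep]
end

section
/- If a quasi-copula Q on [0,1]² satisfies α_Q = 1, where α_Q = sup_{n≥1} max{ max_i 2ⁿ Σ_{j=1}^{2ⁿ} V_Q(R_{ij}ⁿ)⁺ , max_j 2ⁿ Σ_{i=1}^{2ⁿ} V_Q(R_{ij}ⁿ)⁺ } with R_{ij}ⁿ = [(i−1)/2ⁿ, i/2ⁿ]×[(j−1)/2ⁿ, j/2ⁿ], then Q is a copula. -/
open Set

open Finset Filter Topology

/-! The dyadic volumes in each vertical strip of width `2⁻ⁿ` sum to `2⁻ⁿ` by the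
boundary conditions, while `α_Q ≤ 1` bounds the sum of their positive parts by the same number;
hence no dyadic volume is negative. Volumes are additive over grids, so every rectangle with
dyadic corners has nonnegative volume, and an arbitrary rectangle is approximated by dyadic ones
up to an error of `8 · 2⁻ⁿ` because `Q` is `1`-Lipschitz. -/

def rectVol (Q : ℝ → ℝ → ℝ) (x₁ x₂ y₁ y₂ : ℝ) : ℝ :=
  Q x₂ y₂ - Q x₁ y₂ - Q x₂ y₁ + Q x₁ y₁

theorem rectVol_eq_sum_Ico (Q : ℝ → ℝ → ℝ) (f g : ℕ → ℝ) {a b c d : ℕ}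
    (hab : a ≤ b) (hcd : c ≤ d) :
    rectVol Q (f a) (f b) (g c) (g d) =
      ∑ i ∈ Ico a b, ∑ j ∈ Ico c d, rectVol Q (f i) (f (i + 1)) (g j) (g (j + 1)) := by
  have hrow : ∀ i, ∑ j ∈ Ico c d, rectVol Q (f i) (f (i + 1)) (g j) (g (j + 1)) =
      (Q (f (i + 1)) (g d) - Q (f (i + 1)) (g c)) - (Q (f i) (g d) - Q (f i) (g c)) := by
    intro i
    calc _ = ∑ j ∈ Ico c d, ((Q (f (i + 1)) (g (j + 1)) - Q (f i) (g (j + 1)))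
              - (Q (f (i + 1)) (g j) - Q (f i) (g j))) :=
          Finset.sum_congr rfl fun j _ => by unfold rectVol; ring
      _ = _ := by
          rw [Finset.sum_Ico_sub (fun j => Q (f (i + 1)) (g j) - Q (f i) (g j)) hcd]; ring
  simp_rw [hrow, Finset.sum_Ico_sub (fun i => Q (f i) (g d) - Q (f i) (g c)) hab, rectVol]
  ring

theorem rectVol_zero_one {Q : ℝ → ℝ → ℝ} (h0 : ∀ x ∈ Icc (0:ℝ) 1, Q x 0 = 0)
    (h1 : ∀ x ∈ Icc (0:ℝ) 1, Q x 1 = x) {x₁ x₂ : ℝ} (hx₁ : x₁ ∈ Icc (0:ℝ) 1)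
    (hx₂ : x₂ ∈ Icc (0:ℝ) 1) :
    rectVol Q x₁ x₂ 0 1 = x₂ - x₁ := by
  simp only [rectVol, h0 _ hx₁, h0 _ hx₂, h1 _ hx₁, h1 _ hx₂]
  ring

theorem nonneg_of_sum_max_le_sum {ι : Type*} {s : Finset ι} {v : ι → ℝ}
    (h : ∑ j ∈ s, max (v j) 0 ≤ ∑ j ∈ s, v j) {j : ι} (hj : j ∈ s) : 0 ≤ v j := by
  by_contra! hneg
  have : ∑ j ∈ s, v j < ∑ j ∈ s, max (v j) 0 :=
    Finset.sum_lt_sum (fun _ _ => le_max_left _ _) ⟨j, hj, lt_max_of_lt_right hneg⟩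
  linarith

theorem div_two_pow_mem_Icc {n k : ℕ} (hk : k ≤ 2 ^ n) : (k : ℝ) / 2 ^ n ∈ Icc (0:ℝ) 1 :=
  ⟨by positivity, (div_le_one (by positivity)).2 (by exact_mod_cast hk)⟩

theorem dyadVol_eq_rectVol (Q : ℝ → ℝ → ℝ) (n : ℕ) (i j : Fin (2 ^ n)) :
    dyadVol Q n i j = rectVol Q ((i : ℕ) / 2 ^ n) (((i : ℕ) + 1 : ℕ) / 2 ^ n)
      ((j : ℕ) / 2 ^ n) (((j : ℕ) + 1 : ℕ) / 2 ^ n) := by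
  simp only [dyadVol, rectVol, Nat.cast_succ]

theorem sum_dyadVol_strip {Q : ℝ → ℝ → ℝ} (h0 : ∀ x ∈ Icc (0:ℝ) 1, Q x 0 = 0)
    (h1 : ∀ x ∈ Icc (0:ℝ) 1, Q x 1 = x) (n : ℕ) (i : Fin (2 ^ n)) :
    ∑ j, dyadVol Q n i j = 1 / 2 ^ n := by
  have h2 : (2 : ℝ) ^ n ≠ 0 := by positivity
  let g : ℕ → ℝ := fun k => k / 2 ^ n
  have hstrip : ∑ j, dyadVol Q n i j = rectVol Q (g i) (g (i + 1)) (g 0) (g (2 ^ n)) := by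
    rw [rectVol_eq_sum_Ico Q g g (Nat.le_add_right _ 1) (Nat.zero_le _), Nat.Ico_succ_singleton,
      sum_singleton, ← range_eq_Ico, ← Fin.sum_univ_eq_sum_range]
    exact Finset.sum_congr rfl fun j _ => dyadVol_eq_rectVol Q n i j
  have hg0 : g 0 = 0 := by simp only [g, Nat.cast_zero, zero_div]
  have hg1 : g (2 ^ n) = 1 := by simp only [g, Nat.cast_pow, Nat.cast_ofNat, div_self h2]
  rw [hstrip, hg0, hg1, rectVol_zero_one h0 h1 (x₁ := g i) (x₂ := g (i + 1))
    (div_two_pow_mem_Icc i.2.le) (div_two_pow_mem_Icc i.2)]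
  simp only [g, Nat.cast_succ]
  ring

theorem dyadVol_nonneg {Q : ℝ → ℝ → ℝ} (h0 : ∀ x ∈ Icc (0:ℝ) 1, Q x 0 = 0)
    (h1 : ∀ x ∈ Icc (0:ℝ) 1, Q x 1 = x) (hα : 1 ∈ upperBounds (alphaSet Q))
    {n : ℕ} (hn : 1 ≤ n) (i j : Fin (2 ^ n)) : 0 ≤ dyadVol Q n i j := by
  refine nonneg_of_sum_max_le_sum ?_ (Finset.mem_univ j)
  have hle : 2 ^ n * ∑ j, max (dyadVol Q n i j) 0 ≤ 1 := hα ⟨n, hn, Or.inl ⟨i, rfl⟩⟩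
  rw [sum_dyadVol_strip h0 h1, le_div_iff₀ (by positivity)]
  linarith

theorem rectVol_dyadic_nonneg {Q : ℝ → ℝ → ℝ} (h0 : ∀ x ∈ Icc (0:ℝ) 1, Q x 0 = 0)
    (h1 : ∀ x ∈ Icc (0:ℝ) 1, Q x 1 = x) (hα : 1 ∈ upperBounds (alphaSet Q))
    {n : ℕ} (hn : 1 ≤ n) {a b c d : ℕ} (hab : a ≤ b) (hb : b ≤ 2 ^ n) (hcd : c ≤ d)
    (hd : d ≤ 2 ^ n) :
    0 ≤ rectVol Q (a / 2 ^ n) (b / 2 ^ n) (c / 2 ^ n) (d / 2 ^ n) := by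
  let g : ℕ → ℝ := fun k => k / 2 ^ n
  rw [show rectVol Q (a / 2 ^ n) (b / 2 ^ n) (c / 2 ^ n) (d / 2 ^ n) = _ from
    rectVol_eq_sum_Ico Q g g hab hcd]
  refine sum_nonneg fun i hi => sum_nonneg fun j hj => ?_
  rw [Finset.mem_Ico] at hi hj
  simpa only [dyadVol_eq_rectVol] using dyadVol_nonneg h0 h1 hα hn ⟨i, by omega⟩ ⟨j, by omega⟩

theorem floor_mul_two_pow_le {x : ℝ} (hx : x ≤ 1) (n : ℕ) : ⌊x * 2 ^ n⌋₊ ≤ 2 ^ n :=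
  Nat.floor_le_of_le (by push_cast; nlinarith [pow_pos (two_pos (α := ℝ)) n])

theorem abs_sub_floor_mul_two_pow_div_le {x : ℝ} (hx : 0 ≤ x) (n : ℕ) :
    |x - ⌊x * 2 ^ n⌋₊ / 2 ^ n| ≤ 1 / 2 ^ n := by
  have h2 : (0 : ℝ) < 2 ^ n := by positivity
  have hle : (⌊x * 2 ^ n⌋₊ : ℝ) ≤ x * 2 ^ n := Nat.floor_le (by positivity)
  have hlt : x * 2 ^ n < ⌊x * 2 ^ n⌋₊ + 1 := Nat.lt_floor_add_one _
  have hdiff : x - ⌊x * 2 ^ n⌋₊ / 2 ^ n = (x * 2 ^ n - ⌊x * 2 ^ n⌋₊) / 2 ^ n := by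
    field_simp
  rw [hdiff, abs_div, abs_of_pos h2]
  gcongr
  rw [abs_le]
  constructor <;> linarith

theorem abs_sub_apply_floor_div_two_pow_le {Q : ℝ → ℝ → ℝ}
    (hL : ∀ x₁ ∈ Icc (0:ℝ) 1, ∀ x₂ ∈ Icc (0:ℝ) 1, ∀ y₁ ∈ Icc (0:ℝ) 1, ∀ y₂ ∈ Icc (0:ℝ) 1,
      |Q x₂ y₂ - Q x₁ y₁| ≤ |x₂ - x₁| + |y₂ - y₁|)
    {x y : ℝ} (hx : x ∈ Icc (0:ℝ) 1) (hy : y ∈ Icc (0:ℝ) 1) (n : ℕ) :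
    |Q x y - Q (⌊x * 2 ^ n⌋₊ / 2 ^ n) (⌊y * 2 ^ n⌋₊ / 2 ^ n)| ≤ 2 / 2 ^ n :=
  calc _ ≤ |x - ⌊x * 2 ^ n⌋₊ / 2 ^ n| + |y - ⌊y * 2 ^ n⌋₊ / 2 ^ n| :=
        hL _ (div_two_pow_mem_Icc (floor_mul_two_pow_le hx.2 n)) _ hx
          _ (div_two_pow_mem_Icc (floor_mul_two_pow_le hy.2 n)) _ hy
    _ ≤ 1 / 2 ^ n + 1 / 2 ^ n :=
        add_le_add (abs_sub_floor_mul_two_pow_div_le hx.1 n)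
          (abs_sub_floor_mul_two_pow_div_le hy.1 n)
    _ = 2 / 2 ^ n := by ring

theorem neg_le_rectVol {Q : ℝ → ℝ → ℝ} (hQ : IsQuasiCopula Q)
    (hα : 1 ∈ upperBounds (alphaSet Q)) {n : ℕ} (hn : 1 ≤ n) {x₁ x₂ y₁ y₂ : ℝ}
    (hx₁ : x₁ ∈ Icc (0:ℝ) 1) (hx₂ : x₂ ∈ Icc (0:ℝ) 1) (hy₁ : y₁ ∈ Icc (0:ℝ) 1)
    (hy₂ : y₂ ∈ Icc (0:ℝ) 1) (hx : x₁ ≤ x₂) (hy : y₁ ≤ y₂) :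
    -(8 / 2 ^ n) ≤ rectVol Q x₁ x₂ y₁ y₂ := by
  have hfloor {u v : ℝ} (h : u ≤ v) : ⌊u * 2 ^ n⌋₊ ≤ ⌊v * 2 ^ n⌋₊ :=
    Nat.floor_le_floor (by gcongr)
  have hgrid := rectVol_dyadic_nonneg (fun x hx => (hQ.1 x hx).1) (fun x hx => (hQ.1 x hx).2.2.1)
    hα hn (hfloor hx) (floor_mul_two_pow_le hx₂.2 n) (hfloor hy) (floor_mul_two_pow_le hy₂.2 n)
  have c₁ := abs_le.1 (abs_sub_apply_floor_div_two_pow_le hQ.2.2.2 hx₂ hy₂ n)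
  have c₂ := abs_le.1 (abs_sub_apply_floor_div_two_pow_le hQ.2.2.2 hx₁ hy₂ n)
  have c₃ := abs_le.1 (abs_sub_apply_floor_div_two_pow_le hQ.2.2.2 hx₂ hy₁ n)
  have c₄ := abs_le.1 (abs_sub_apply_floor_div_two_pow_le hQ.2.2.2 hx₁ hy₁ n)
  have h8 : (8 : ℝ) / 2 ^ n = 4 * (2 / 2 ^ n) := by ring
  unfold rectVol at hgrid ⊢
  linarith [c₁.1, c₂.2, c₃.2, c₄.1]

theorem stmt17 (Q : ℝ → ℝ → ℝ) (hQ : IsQuasiCopula Q)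
    (halpha : IsLUB (alphaSet Q) 1) :
    IsCopula Q := by
  refine ⟨hQ.1, fun x₁ hx₁ x₂ hx₂ y₁ hy₁ y₂ hy₂ hx hy => ?_⟩
  have hlim : Tendsto (fun n : ℕ => -(8 / (2 : ℝ) ^ n)) atTop (𝓝 0) := by
    simpa [div_eq_mul_inv] using
      ((tendsto_pow_atTop_nhds_zero_of_lt_one (by norm_num) (by norm_num : (2 : ℝ)⁻¹ < 1)).const_mul
        (8 : ℝ)).neg
  exact le_of_tendsto hlim (eventually_atTop.2
    ⟨1, fun n hn => neg_le_rectVol hQ halpha.1 hn hx₁ hx₂ hy₁ hy₂ hx hy⟩)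
end
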